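/- arXiv:2306.07644 — 4 statements merged into one kernel-verified Lean document; each statement's English description precedes it below -/
import Mathlib

section
/- In the FedAvg setup, fix a neuron h and a round t. Then there exist real coefficients λ_{k,i,x}, one for each client k ∈ {1,…,K}, local update i ∈ {0,…,n−1}, and sample x ∈ A^h(θ_{t,k,i}, B_{t,k,i}), with each λ_{k,i,x} ≠ 0 — explicitly λ_{k,i,x} = −(η/K) · ∂_h F_{φ_{t,k,i}, y}(ReLU(W_{t,k,i} x + b_{t,k,i})), where y is the label paired with x in B_{t,k,i} — such that the aggregated round-level updates satisfy ΔW^h_t = Σ_{k} Σ_{i} Σ_{x ∈ A^h(θ_{t,k,i},B_{t,k,i})} λ_{k,i,x} · x and Δb^h_t = Σ_{k} Σ_{i} Σ_{x ∈ A^h(θ_{t,k,i},B_{t,k,i})} λ_{k,i,x}. In particular ΔW^h_t lies in the linear span of the round-level activation set A^h_t and Δb^h_t equals the sum of the coefficients. -/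
noncomputable section

/-- Pre-activation `W^h · x + b^h` of neuron `h` on sample `x`. -/
def preact {d H : ℕ} (W : Fin H → Fin d → ℝ) (b : Fin H → ℝ) (x : Fin d → ℝ)
    (h : Fin H) : ℝ :=
  (∑ j, W h j * x j) + b h

/-- Componentwise ReLU output of the first layer. -/
def reluVec {d H : ℕ} (W : Fin H → Fin d → ℝ) (b : Fin H → ℝ) (x : Fin d → ℝ) :
    Fin H → ℝ :=
  fun h => max (preact W b x h) 0

/-- `F_{φ,y}(z) = ℓ(f(φ, z), y)`. -/
def Floss {H r C : ℕ} {Y : Type*} (f : (Fin r → ℝ) → (Fin H → ℝ) → Fin C → ℝ)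
    (l : (Fin C → ℝ) → Y → ℝ) (φ : Fin r → ℝ) (y : Y) (z : Fin H → ℝ) : ℝ :=
  l (f φ z) y

/-- Partial derivative of `F : ℝ^H → ℝ` in the `h`-th coordinate at `z`. -/
def dFh {H : ℕ} (F : (Fin H → ℝ) → ℝ) (z : Fin H → ℝ) (h : Fin H) : ℝ :=
  fderiv ℝ F z (Pi.single h 1)

/-- The loss of the model `θ = (W, b, φ)` on the batch `B`:
`L(θ; B) = ∑_{(x,y) ∈ B} ℓ(f(φ, ReLU(W x + b)), y)`. -/
def batchLoss {d H r C : ℕ} {Y : Type*} (f : (Fin r → ℝ) → (Fin H → ℝ) → Fin C → ℝ)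
    (l : (Fin C → ℝ) → Y → ℝ)
    (θ : (Fin H → Fin d → ℝ) × (Fin H → ℝ) × (Fin r → ℝ))
    (B : Finset ((Fin d → ℝ) × Y)) : ℝ :=
  ∑ p ∈ B, Floss f l θ.2.2 p.2 (reluVec θ.1 θ.2.1 p.1)

open Classical in
/-- Batch-level activation set `A^h(θ, B)` of neuron `h`, as a finset of
sample/label pairs of the batch. -/
def activB {d H r C : ℕ} {Y : Type*} (f : (Fin r → ℝ) → (Fin H → ℝ) → Fin C → ℝ)
    (l : (Fin C → ℝ) → Y → ℝ)
    (θ : (Fin H → Fin d → ℝ) × (Fin H → ℝ) × (Fin r → ℝ))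
    (B : Finset ((Fin d → ℝ) × Y)) (h : Fin H) : Finset ((Fin d → ℝ) × Y) :=
  B.filter (fun p => 0 < preact θ.1 θ.2.1 p.1 h ∧
    dFh (Floss f l θ.2.2 p.2) (reluVec θ.1 θ.2.1 p.1) h ≠ 0)

/-- The gradient of a function on the parameter space, assembled coordinatewise
from directional derivatives. -/
def gradP {d H r : ℕ} (L : ((Fin H → Fin d → ℝ) × (Fin H → ℝ) × (Fin r → ℝ)) → ℝ)
    (θ : (Fin H → Fin d → ℝ) × (Fin H → ℝ) × (Fin r → ℝ)) :
    (Fin H → Fin d → ℝ) × (Fin H → ℝ) × (Fin r → ℝ) :=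
  (fun h j => fderiv ℝ L θ (Pi.single h (Pi.single j 1), 0, 0),
   fun h => fderiv ℝ L θ (0, Pi.single h 1, 0),
   fun s => fderiv ℝ L θ (0, 0, Pi.single s 1))

/-- Round-level activation set `A^h_t` of neuron `h`: the set of samples activating
neuron `h` at some local update of some client during the round. -/
def roundActiv {d H r C K : ℕ} {Y : Type*} (f : (Fin r → ℝ) → (Fin H → ℝ) → Fin C → ℝ)
    (l : (Fin C → ℝ) → Y → ℝ) (n : ℕ)
    (θ : Fin K → ℕ → ((Fin H → Fin d → ℝ) × (Fin H → ℝ) × (Fin r → ℝ)))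
    (Bt : Fin K → ℕ → Finset ((Fin d → ℝ) × Y)) (h : Fin H) : Set (Fin d → ℝ) :=
  {x | ∃ k, ∃ i < n, ∃ y, (x, y) ∈ activB f l (θ k i) (Bt k i) h}

/-- The explicit coefficient `λ_{k,i,x} = -(η/K) ∂_h F_{φ_{t,k,i},y}(ReLU(W_{t,k,i} x + b_{t,k,i}))`
attached to the occurrence of the sample/label pair `p` in the batch of client `k`
at local update `i`. -/
def lamKI {d H r C : ℕ} {Y : Type*} (f : (Fin r → ℝ) → (Fin H → ℝ) → Fin C → ℝ)
    (l : (Fin C → ℝ) → Y → ℝ) (η : ℝ) (K : ℕ)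
    (θ : (Fin H → Fin d → ℝ) × (Fin H → ℝ) × (Fin r → ℝ))
    (h : Fin H) (p : (Fin d → ℝ) × Y) : ℝ :=
  -(η / (K : ℝ)) * dFh (Floss f l θ.2.2 p.2) (reluVec θ.1 θ.2.1 p.1) h


/-! Away from the kinks of ReLU, backpropagation through the first layer gives
`∂L/∂W^h_j = ∑_{(x,y) ∈ B} 1[W^h·x + b^h > 0] · ∂_h F_{φ,y} · x_j` and the same expression
without `x_j` for `∂L/∂b^h`; only the samples of `A^h(θ, B)` contribute a nonzero term.
Hence every local SGD step moves `W^h` by a combination of activating samples and `b^h` by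
the sum of its coefficients, and since the FedAvg round update is the average over clients
of the telescoped local updates, the coefficients `-(η/K) ∂_h F` simply add up. -/

abbrev Params (d H r : ℕ) : Type := (Fin H → Fin d → ℝ) × (Fin H → ℝ) × (Fin r → ℝ)

def sampleLoss {d H r C : ℕ} {Y : Type*} (f : (Fin r → ℝ) → (Fin H → ℝ) → Fin C → ℝ)
    (l : (Fin C → ℝ) → Y → ℝ) (x : Fin d → ℝ) (y : Y) (ψ : Params d H r) : ℝ :=
  Floss f l ψ.2.2 y (reluVec ψ.1 ψ.2.1 x)

open Filter in
lemma hasDerivAt_max_zero {a : ℝ} (ha : a ≠ 0) :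
    HasDerivAt (fun t => max t 0) (if 0 < a then (1 : ℝ) else 0) a := by
  rcases ha.lt_or_gt with hneg | hpos
  · rw [if_neg hneg.not_gt]
    refine (hasDerivAt_const a 0).congr_of_eventuallyEq ?_
    filter_upwards [Iio_mem_nhds hneg] with t ht using max_eq_right ht.le
  · rw [if_pos hpos]
    refine (hasDerivAt_id a).congr_of_eventuallyEq ?_
    filter_upwards [Ioi_mem_nhds hpos] with t ht using max_eq_left ht.le

lemma preact_add_smul {d H : ℕ} (W V : Fin H → Fin d → ℝ) (b c : Fin H → ℝ) (x : Fin d → ℝ)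
    (t : ℝ) (h : Fin H) :
    preact (W + t • V) (b + t • c) x h = preact W b x h + t * preact V c x h := by
  simp only [preact, Pi.add_apply, Pi.smul_apply, smul_eq_mul, add_mul, mul_add,
    Finset.sum_add_distrib, Finset.mul_sum, mul_assoc]
  ring

lemma preact_single_weight {d H : ℕ} (x : Fin d → ℝ) (h : Fin H) (j : Fin d) :
    preact (Pi.single h (Pi.single j 1)) 0 x = Pi.single h (x j) := by
  ext h'
  rcases eq_or_ne h' h with rfl | hh
  · simp [preact, Pi.single_apply]
  · simp [preact, hh]

lemma preact_single_bias {d H : ℕ} (x : Fin d → ℝ) (h : Fin H) :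
    preact 0 (Pi.single h 1) x = Pi.single h 1 := by
  ext h'
  simp [preact]

lemma hasDerivAt_reluVec_line {d H : ℕ} {W V : Fin H → Fin d → ℝ} {b c : Fin H → ℝ}
    {x : Fin d → ℝ} (hx : ∀ h, preact W b x h ≠ 0) :
    HasDerivAt (fun t : ℝ => reluVec (W + t • V) (b + t • c) x)
      (fun h => (if 0 < preact W b x h then 1 else 0) * preact V c x h) 0 := by
  refine hasDerivAt_pi.2 fun h => ?_
  simp only [reluVec, preact_add_smul]
  have hline : HasDerivAt (fun t : ℝ => preact W b x h + t * preact V c x h)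
      (preact V c x h) 0 := by
    simpa using ((hasDerivAt_id (0 : ℝ)).mul_const (preact V c x h)).const_add (preact W b x h)
  exact (hasDerivAt_max_zero (hx h)).comp_of_eq 0 hline (by simp)

lemma fderiv_apply_eq_sum_dFh {H : ℕ} (F : (Fin H → ℝ) → ℝ) (z w : Fin H → ℝ) :
    fderiv ℝ F z w = ∑ h, w h * dFh F z h := by
  conv_lhs => rw [← Finset.univ_sum_single w]
  refine (map_sum _ _ _).trans (Finset.sum_congr rfl fun h _ => ?_)
  rw [dFh, ← smul_eq_mul, ← map_smul, ← Pi.single_smul', smul_eq_mul, mul_one]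

lemma inv_natCast_smul_sum_sub_eq_sum_sum {𝕜 M : Type*} [Field 𝕜] [CharZero 𝕜] [AddCommGroup M]
    [Module 𝕜 M] {K : ℕ} (hK : K ≠ 0) (n : ℕ) (θ : Fin K → ℕ → M) {θ₀ : M}
    (hinit : ∀ k, θ k 0 = θ₀) :
    (K : 𝕜)⁻¹ • ∑ k, θ k n - θ₀ =
      ∑ k, ∑ i ∈ Finset.range n, (K : 𝕜)⁻¹ • (θ k (i + 1) - θ k i) := by
  have hK' : (K : 𝕜) ≠ 0 := Nat.cast_ne_zero.2 hK
  have htelescope (k : Fin K) : ∑ i ∈ Finset.range n, (θ k (i + 1) - θ k i) = θ k n - θ₀ := by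
    rw [Finset.sum_range_sub (θ k), hinit]
  simp_rw [← Finset.smul_sum, htelescope, Finset.sum_sub_distrib, Finset.sum_const,
    Finset.card_univ, Fintype.card_fin, smul_sub, ← Nat.cast_smul_eq_nsmul 𝕜, inv_smul_smul₀ hK']

section Backprop

variable {d H r C : ℕ} {Y : Type*} {f : (Fin r → ℝ) → (Fin H → ℝ) → Fin C → ℝ}
  {l : (Fin C → ℝ) → Y → ℝ}

lemma differentiable_Floss
    (hf : Differentiable ℝ (fun q : (Fin r → ℝ) × (Fin H → ℝ) => f q.1 q.2))
    (hl : ∀ y, Differentiable ℝ (fun u => l u y)) (y : Y) :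
    Differentiable ℝ (fun q : (Fin r → ℝ) × (Fin H → ℝ) => Floss f l q.1 y q.2) :=
  (hl y).comp hf

lemma differentiableAt_sampleLoss
    (hf : Differentiable ℝ (fun q : (Fin r → ℝ) × (Fin H → ℝ) => f q.1 q.2))
    (hl : ∀ y, Differentiable ℝ (fun u => l u y)) {θ : Params d H r} {x : Fin d → ℝ}
    (hx : ∀ h, preact θ.1 θ.2.1 x h ≠ 0) (y : Y) :
    DifferentiableAt ℝ (sampleLoss f l x y) θ := by
  have hpreact (h : Fin H) :
      Differentiable ℝ (fun ψ : Params d H r => preact ψ.1 ψ.2.1 x h) := by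
    unfold preact
    fun_prop
  have hrelu : DifferentiableAt ℝ (fun ψ : Params d H r => reluVec ψ.1 ψ.2.1 x) θ :=
    differentiableAt_pi.2 fun h =>
      (hasDerivAt_max_zero (hx h)).differentiableAt.comp (g := fun t => max t 0) θ (hpreact h θ)
  exact (differentiable_Floss hf hl y _).comp θ (differentiableAt_snd.snd.prodMk hrelu)

/- Directions `(V, c, 0)` keep `φ` fixed, so only the partial derivatives of `F_{φ,y}` in `z`
enter. -/
lemma hasLineDerivAt_sampleLoss
    (hf : Differentiable ℝ (fun q : (Fin r → ℝ) × (Fin H → ℝ) => f q.1 q.2))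
    (hl : ∀ y, Differentiable ℝ (fun u => l u y)) {θ : Params d H r} {x : Fin d → ℝ}
    (hx : ∀ h, preact θ.1 θ.2.1 x h ≠ 0) (y : Y) (V : Fin H → Fin d → ℝ) (c : Fin H → ℝ) :
    HasLineDerivAt ℝ (sampleLoss f l x y)
      (∑ h, (if 0 < preact θ.1 θ.2.1 x h then 1 else 0) * preact V c x h *
        dFh (Floss f l θ.2.2 y) (reluVec θ.1 θ.2.1 x) h) θ (V, c, 0) := by
  have hF : DifferentiableAt ℝ (Floss f l θ.2.2 y) (reluVec θ.1 θ.2.1 x) :=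
    (differentiable_Floss hf hl y).comp (differentiable_const _ |>.prodMk differentiable_id) _
  have hcomp := hF.hasFDerivAt.comp_hasDerivAt_of_eq 0
    (hasDerivAt_reluVec_line (V := V) (c := c) hx) (by simp)
  rw [fderiv_apply_eq_sum_dFh] at hcomp
  unfold HasLineDerivAt
  convert hcomp using 1
  ext t
  simp [sampleLoss]

lemma fderiv_batchLoss_apply
    (hf : Differentiable ℝ (fun q : (Fin r → ℝ) × (Fin H → ℝ) => f q.1 q.2))
    (hl : ∀ y, Differentiable ℝ (fun u => l u y)) {θ : Params d H r}
    {B : Finset ((Fin d → ℝ) × Y)} (hB : ∀ h, ∀ p ∈ B, preact θ.1 θ.2.1 p.1 h ≠ 0)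
    (V : Fin H → Fin d → ℝ) (c : Fin H → ℝ) :
    fderiv ℝ (fun ψ => batchLoss f l ψ B) θ (V, c, 0) =
      ∑ p ∈ B, ∑ h, (if 0 < preact θ.1 θ.2.1 p.1 h then 1 else 0) * preact V c p.1 h *
        dFh (Floss f l θ.2.2 p.2) (reluVec θ.1 θ.2.1 p.1) h := by
  have hdiff : DifferentiableAt ℝ (fun ψ => batchLoss f l ψ B) θ :=
    DifferentiableAt.fun_sum fun p hp =>
      differentiableAt_sampleLoss hf hl (fun h => hB h p hp) p.2
  have hline : HasLineDerivAt ℝ (fun ψ => batchLoss f l ψ B) _ θ (V, c, 0) :=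
    HasDerivAt.fun_sum fun p hp =>
      hasLineDerivAt_sampleLoss hf hl (fun h => hB h p hp) p.2 V c
  rw [← hdiff.lineDeriv_eq_fderiv, hline.lineDeriv]

lemma sum_sum_single_eq_sum_activB (θ : Params d H r) (B : Finset ((Fin d → ℝ) × Y))
    (h : Fin H) (g : (Fin d → ℝ) × Y → ℝ) :
    ∑ p ∈ B, ∑ h', (if 0 < preact θ.1 θ.2.1 p.1 h' then 1 else 0) *
        (Pi.single h (g p) : Fin H → ℝ) h' * dFh (Floss f l θ.2.2 p.2) (reluVec θ.1 θ.2.1 p.1) h' =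
      ∑ p ∈ activB f l θ B h, dFh (Floss f l θ.2.2 p.2) (reluVec θ.1 θ.2.1 p.1) h * g p := by
  rw [activB, Finset.sum_filter]
  refine Finset.sum_congr rfl fun p _ => ?_
  simp only [Pi.single_apply, mul_ite, ite_mul, mul_zero, zero_mul, Finset.sum_ite_eq',
    Finset.mem_univ, if_true]
  by_cases hpos : 0 < preact θ.1 θ.2.1 p.1 h <;>
    by_cases hdF : dFh (Floss f l θ.2.2 p.2) (reluVec θ.1 θ.2.1 p.1) h = 0 <;>
    simp [hpos, hdF, mul_comm]

lemma gradP_batchLoss_fst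
    (hf : Differentiable ℝ (fun q : (Fin r → ℝ) × (Fin H → ℝ) => f q.1 q.2))
    (hl : ∀ y, Differentiable ℝ (fun u => l u y)) {θ : Params d H r}
    {B : Finset ((Fin d → ℝ) × Y)} (hB : ∀ h, ∀ p ∈ B, preact θ.1 θ.2.1 p.1 h ≠ 0)
    (h : Fin H) :
    (gradP (fun ψ => batchLoss f l ψ B) θ).1 h =
      ∑ p ∈ activB f l θ B h, dFh (Floss f l θ.2.2 p.2) (reluVec θ.1 θ.2.1 p.1) h • p.1 := by
  ext j
  simp only [gradP, fderiv_batchLoss_apply hf hl hB, preact_single_weight, Finset.sum_apply,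
    Pi.smul_apply, smul_eq_mul]
  exact sum_sum_single_eq_sum_activB θ B h (fun p => p.1 j)

lemma gradP_batchLoss_snd_fst
    (hf : Differentiable ℝ (fun q : (Fin r → ℝ) × (Fin H → ℝ) => f q.1 q.2))
    (hl : ∀ y, Differentiable ℝ (fun u => l u y)) {θ : Params d H r}
    {B : Finset ((Fin d → ℝ) × Y)} (hB : ∀ h, ∀ p ∈ B, preact θ.1 θ.2.1 p.1 h ≠ 0)
    (h : Fin H) :
    (gradP (fun ψ => batchLoss f l ψ B) θ).2.1 h =
      ∑ p ∈ activB f l θ B h, dFh (Floss f l θ.2.2 p.2) (reluVec θ.1 θ.2.1 p.1) h := by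
  simp only [gradP, fderiv_batchLoss_apply hf hl hB, preact_single_bias]
  simpa using sum_sum_single_eq_sum_activB θ B h (fun _ => 1)

lemma inv_smul_sgdStep_sub_fst
    (hf : Differentiable ℝ (fun q : (Fin r → ℝ) × (Fin H → ℝ) => f q.1 q.2))
    (hl : ∀ y, Differentiable ℝ (fun u => l u y)) {θ : Params d H r}
    {B : Finset ((Fin d → ℝ) × Y)} (hB : ∀ h, ∀ p ∈ B, preact θ.1 θ.2.1 p.1 h ≠ 0)
    (η : ℝ) (K : ℕ) (h : Fin H) :
    ((K : ℝ)⁻¹ • (θ - η • gradP (fun ψ => batchLoss f l ψ B) θ - θ)).1 h =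
      ∑ p ∈ activB f l θ B h, lamKI f l η K θ h p • p.1 := by
  simp only [sub_sub_cancel_left, Prod.smul_fst, Pi.smul_apply, gradP_batchLoss_fst hf hl hB,
    Finset.smul_sum, smul_smul, lamKI, ← neg_smul]
  congr! 2
  ring

lemma inv_smul_sgdStep_sub_snd_fst
    (hf : Differentiable ℝ (fun q : (Fin r → ℝ) × (Fin H → ℝ) => f q.1 q.2))
    (hl : ∀ y, Differentiable ℝ (fun u => l u y)) {θ : Params d H r}
    {B : Finset ((Fin d → ℝ) × Y)} (hB : ∀ h, ∀ p ∈ B, preact θ.1 θ.2.1 p.1 h ≠ 0)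
    (η : ℝ) (K : ℕ) (h : Fin H) :
    ((K : ℝ)⁻¹ • (θ - η • gradP (fun ψ => batchLoss f l ψ B) θ - θ)).2.1 h =
      ∑ p ∈ activB f l θ B h, lamKI f l η K θ h p := by
  simp only [sub_sub_cancel_left, Prod.smul_snd, Prod.smul_fst, Prod.snd_neg, Prod.fst_neg,
    Pi.smul_apply, Pi.neg_apply, gradP_batchLoss_snd_fst hf hl hB, Finset.mul_sum,
    smul_eq_mul, lamKI, ← Finset.sum_neg_distrib]
  congr! 1
  ring

lemma lamKI_ne_zero_of_mem_activB {η : ℝ} (hη : η ≠ 0) {K : ℕ} (hK : K ≠ 0)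
    {θ : Params d H r} {B : Finset ((Fin d → ℝ) × Y)} {h : Fin H} {p : (Fin d → ℝ) × Y}
    (hp : p ∈ activB f l θ B h) : lamKI f l η K θ h p ≠ 0 :=
  mul_ne_zero (neg_ne_zero.2 (div_ne_zero hη (Nat.cast_ne_zero.2 hK)))
    (Finset.mem_filter.1 hp).2.2

end Backprop

theorem stmt4_general {d H r C K : ℕ} {Y : Type*} (hK : 0 < K)
    (f : (Fin r → ℝ) → (Fin H → ℝ) → Fin C → ℝ)
    (l : (Fin C → ℝ) → Y → ℝ)
    (hf : Differentiable ℝ (fun q : (Fin r → ℝ) × (Fin H → ℝ) => f q.1 q.2))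
    (hl : ∀ y, Differentiable ℝ (fun u => l u y))
    (n : ℕ) (η : ℝ) (hη : 0 < η)
    (θprev : (Fin H → Fin d → ℝ) × (Fin H → ℝ) × (Fin r → ℝ))
    (Bt : Fin K → ℕ → Finset ((Fin d → ℝ) × Y))
    (θ : Fin K → ℕ → ((Fin H → Fin d → ℝ) × (Fin H → ℝ) × (Fin r → ℝ)))
    (hinit : ∀ k, θ k 0 = θprev)
    (hstep : ∀ k, ∀ i < n,
      θ k (i + 1) = θ k i - η • gradP (fun ψ => batchLoss f l ψ (Bt k i)) (θ k i))
    (hnd : ∀ k, ∀ i < n, ∀ h' : Fin H, ∀ p ∈ Bt k i,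
      preact (θ k i).1 (θ k i).2.1 p.1 h' ≠ 0)
    (θt : (Fin H → Fin d → ℝ) × (Fin H → ℝ) × (Fin r → ℝ))
    (hagg : θt = (K : ℝ)⁻¹ • ∑ k, θ k n)
    (h : Fin H) :
    (∀ k, ∀ i < n, ∀ p ∈ activB f l (θ k i) (Bt k i) h, lamKI f l η K (θ k i) h p ≠ 0) ∧
    θt.1 h - θprev.1 h
      = ∑ k, ∑ i ∈ Finset.range n, ∑ p ∈ activB f l (θ k i) (Bt k i) h,
          lamKI f l η K (θ k i) h p • p.1 ∧
    θt.2.1 h - θprev.2.1 h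
      = ∑ k, ∑ i ∈ Finset.range n, ∑ p ∈ activB f l (θ k i) (Bt k i) h,
          lamKI f l η K (θ k i) h p := by
  have hround : θt - θprev = ∑ k, ∑ i ∈ Finset.range n, (K : ℝ)⁻¹ • (θ k (i + 1) - θ k i) :=
    hagg ▸ inv_natCast_smul_sum_sub_eq_sum_sum hK.ne' n θ hinit
  refine ⟨fun k i _ p hp => lamKI_ne_zero_of_mem_activB hη.ne' hK.ne' hp, ?_, ?_⟩
  · have hW := congrArg (fun ψ : Params d H r => ψ.1 h) hround
    simp only [Prod.fst_sub, Pi.sub_apply, Prod.fst_sum, Finset.sum_apply] at hW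
    rw [hW]
    refine Finset.sum_congr rfl fun k _ => Finset.sum_congr rfl fun i hi => ?_
    have hin := Finset.mem_range.1 hi
    rw [hstep k i hin]
    exact inv_smul_sgdStep_sub_fst hf hl (hnd k i hin) η K h
  · have hb := congrArg (fun ψ : Params d H r => ψ.2.1 h) hround
    simp only [Prod.snd_sub, Prod.fst_sub, Pi.sub_apply, Prod.snd_sum, Prod.fst_sum,
      Finset.sum_apply] at hb
    rw [hb]
    refine Finset.sum_congr rfl fun k _ => Finset.sum_congr rfl fun i hi => ?_
    have hin := Finset.mem_range.1 hi
    rw [hstep k i hin]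
    exact inv_smul_sgdStep_sub_snd_fst hf hl (hnd k i hin) η K h

theorem stmt4 {d H r C K : ℕ} {Y : Type*} (hK : 0 < K)
    (f : (Fin r → ℝ) → (Fin H → ℝ) → Fin C → ℝ)
    (l : (Fin C → ℝ) → Y → ℝ)
    (hf : Differentiable ℝ (fun q : (Fin r → ℝ) × (Fin H → ℝ) => f q.1 q.2))
    (hl : ∀ y, Differentiable ℝ (fun u => l u y))
    (n : ℕ) (η : ℝ) (hη : 0 < η)
    (θprev : (Fin H → Fin d → ℝ) × (Fin H → ℝ) × (Fin r → ℝ))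
    (D : Fin K → Finset ((Fin d → ℝ) × Y))
    (Bt : Fin K → ℕ → Finset ((Fin d → ℝ) × Y))
    (θ : Fin K → ℕ → ((Fin H → Fin d → ℝ) × (Fin H → ℝ) × (Fin r → ℝ)))
    (hBD : ∀ k, ∀ i < n, Bt k i ⊆ D k)
    (hinj : ∀ k, ∀ i < n, ∀ p ∈ Bt k i, ∀ q ∈ Bt k i, p.1 = q.1 → p = q)
    (hinit : ∀ k, θ k 0 = θprev)
    (hstep : ∀ k, ∀ i < n,
      θ k (i + 1) = θ k i - η • gradP (fun ψ => batchLoss f l ψ (Bt k i)) (θ k i))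
    (hnd : ∀ k, ∀ i < n, ∀ h' : Fin H, ∀ p ∈ Bt k i,
      preact (θ k i).1 (θ k i).2.1 p.1 h' ≠ 0)
    (θt : (Fin H → Fin d → ℝ) × (Fin H → ℝ) × (Fin r → ℝ))
    (hagg : θt = (K : ℝ)⁻¹ • ∑ k, θ k n)
    (h : Fin H) :
    (∀ k, ∀ i < n, ∀ p ∈ activB f l (θ k i) (Bt k i) h, lamKI f l η K (θ k i) h p ≠ 0) ∧
    θt.1 h - θprev.1 h
      = ∑ k, ∑ i ∈ Finset.range n, ∑ p ∈ activB f l (θ k i) (Bt k i) h,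
          lamKI f l η K (θ k i) h p • p.1 ∧
    θt.2.1 h - θprev.2.1 h
      = ∑ k, ∑ i ∈ Finset.range n, ∑ p ∈ activB f l (θ k i) (Bt k i) h,
          lamKI f l η K (θ k i) h p :=
  stmt4_general hK f l hf hl n η hη θprev Bt θ hinit hstep hnd θt hagg h
end
end

section
/- In the FedAvg setup, fix a round t, a client k, a neuron h, and an index j ∈ {0, …, n}. If the batch-level activation sets of neuron h are empty for all local updates before j, i.e., A^h(θ_{t,k,i}, B_{t,k,i}) = ∅ for all 0 ≤ i < j, then the extended weights of neuron h are unchanged during these updates: W^h_{t,k,j} = W^h_{t−1} and b^h_{t,k,j} = b^h_{t−1}. -/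
noncomputable section

/-! Moving only row `h` of `(W, b)` along a direction `(w, u)` changes, for each sample `x`, only
the `h`-th pre-activation, and does so affinely: `a + t s` with `s = w · x + u`. Since `a ≠ 0`, its
sign is locally constant, so near `t = 0` the hidden layer moves along the straight line
`t ↦ z + t c e_h`, with `c = s` if the neuron is active at `x` and `c = 0` otherwise. The
derivative of the sample loss along this line is `c · ∂_h F(z)`, which vanishes in both cases
once `x` lies outside the activation set. Hence every row-`h` directional derivative of the
batch loss is zero, the row-`h` gradient entries vanish, and SGD leaves row `h` in place. -/

open Filter Topology

/-- Where `L` is not differentiable, `fderiv` is `0` by convention, so no differentiability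
hypothesis is needed. -/
lemma fderiv_apply_eq_zero_of_hasLineDerivAt {𝕜 E F : Type*} [NontriviallyNormedField 𝕜]
    [NormedAddCommGroup E] [NormedSpace 𝕜 E] [NormedAddCommGroup F] [NormedSpace 𝕜 F]
    {L : E → F} {x v : E} (hL : HasLineDerivAt 𝕜 L 0 x v) : fderiv 𝕜 L x v = 0 := by
  by_cases hd : DifferentiableAt 𝕜 L x
  · rw [← hd.lineDeriv_eq_fderiv, hL.lineDeriv]
  · simp [fderiv_zero_of_not_differentiableAt hd]

section RowPerturbation

variable {d H : ℕ} (W : Fin H → Fin d → ℝ) (b : Fin H → ℝ) (x : Fin d → ℝ) (h : Fin H)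
  (w : Fin d → ℝ) (u : ℝ)

lemma preact_add_smul_single (t : ℝ) (h' : Fin H) :
    preact (W + t • (Pi.single h w : Fin H → Fin d → ℝ)) (b + t • Pi.single h u) x h' =
      preact W b x h' + t * (Pi.single h (∑ j, w j * x j + u) : Fin H → ℝ) h' := by
  rcases eq_or_ne h' h with rfl | hne
  · simp only [preact, Pi.add_apply, Pi.smul_apply, Pi.single_eq_same, smul_eq_mul, add_mul,
      Finset.sum_add_distrib, mul_assoc, ← Finset.mul_sum]
    ring
  · simp [preact, Pi.single_eq_of_ne hne]

lemma eventually_reluVec_add_smul_single (hx : preact W b x h ≠ 0) :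
    ∀ᶠ t in 𝓝 (0 : ℝ),
      reluVec (W + t • (Pi.single h w : Fin H → Fin d → ℝ)) (b + t • Pi.single h u) x =
        reluVec W b x +
          t • Pi.single h (if 0 < preact W b x h then ∑ j, w j * x j + u else 0) := by
  set a := preact W b x h
  set s := ∑ j, w j * x j + u
  have hline : Tendsto (fun t : ℝ => a + t * s) (𝓝 0) (𝓝 a) :=
    (continuous_const.add (continuous_id.mul continuous_const)).tendsto' 0 a (by simp [a])
  have hsign : ∀ᶠ t in 𝓝 (0 : ℝ), (0 < a + t * s ↔ 0 < a) := by
    rcases hx.lt_or_gt with hneg | hpos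
    · filter_upwards [hline.eventually (gt_mem_nhds hneg)] with t ht
      constructor <;> intro <;> linarith
    · filter_upwards [hline.eventually (lt_mem_nhds hpos)] with t ht
      constructor <;> intro <;> linarith
  filter_upwards [hsign] with t hsign_t
  funext h'
  simp only [reluVec, preact_add_smul_single, Pi.add_apply, Pi.smul_apply, smul_eq_mul]
  rcases eq_or_ne h' h with rfl | hne
  · simp only [Pi.single_eq_same]
    split_ifs with ha
    · rw [max_eq_left (hsign_t.2 ha).le, max_eq_left ha.le]
    · rw [max_eq_right (not_lt.1 (mt hsign_t.1 ha)), max_eq_right (not_lt.1 ha), mul_zero, add_zero]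
  · simp [Pi.single_eq_of_ne hne]

lemma hasDerivAt_comp_reluVec_add_smul_single {F : (Fin H → ℝ) → ℝ}
    (hF : DifferentiableAt ℝ F (reluVec W b x)) (hx : preact W b x h ≠ 0)
    (hdF : 0 < preact W b x h → dFh F (reluVec W b x) h = 0) :
    HasDerivAt
      (fun t : ℝ => F (reluVec (W + t • (Pi.single h w : Fin H → Fin d → ℝ))
        (b + t • Pi.single h u) x)) 0 0 := by
  set c := if 0 < preact W b x h then ∑ j, w j * x j + u else 0
  have hc : fderiv ℝ F (reluVec W b x) (Pi.single h c) = 0 := by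
    rw [show Pi.single h c = c • Pi.single h 1 by rw [← Pi.single_smul', smul_eq_mul, mul_one],
      map_smul, smul_eq_mul]
    by_cases ha : 0 < preact W b x h
    · rw [show fderiv ℝ F (reluVec W b x) (Pi.single h 1) = 0 from hdF ha, mul_zero]
    · simp [c, ha]
  have hline :
      HasDerivAt (fun t : ℝ => reluVec W b x + t • Pi.single h c) (Pi.single h c) 0 := by
    simpa using ((hasDerivAt_id (0 : ℝ)).smul_const (Pi.single h c)).const_add (reluVec W b x)
  have hcomp := hF.hasFDerivAt.comp_hasDerivAt_of_eq 0 hline (by simp)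
  rw [hc] at hcomp
  refine hcomp.congr_of_eventuallyEq ?_
  filter_upwards [eventually_reluVec_add_smul_single W b x h w u hx] with t ht
  rw [Function.comp_apply, ht]

end RowPerturbation

section BatchLoss

variable {d H r C : ℕ} {Y : Type*}

lemma differentiable_floss {f : (Fin r → ℝ) → (Fin H → ℝ) → Fin C → ℝ}
    {l : (Fin C → ℝ) → Y → ℝ}
    (hf : Differentiable ℝ (fun q : (Fin r → ℝ) × (Fin H → ℝ) => f q.1 q.2))
    (hl : ∀ y, Differentiable ℝ (fun u => l u y)) (φ : Fin r → ℝ) (y : Y) :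
    Differentiable ℝ (Floss f l φ y) :=
  ((hl y).comp hf).comp ((differentiable_const φ).prodMk differentiable_id)

lemma hasLineDerivAt_batchLoss_row_of_activB_eq_empty
    {f : (Fin r → ℝ) → (Fin H → ℝ) → Fin C → ℝ} {l : (Fin C → ℝ) → Y → ℝ}
    (hF : ∀ φ y, Differentiable ℝ (Floss f l φ y))
    (θ : (Fin H → Fin d → ℝ) × (Fin H → ℝ) × (Fin r → ℝ)) (B : Finset ((Fin d → ℝ) × Y))
    (h : Fin H) (hnd : ∀ p ∈ B, preact θ.1 θ.2.1 p.1 h ≠ 0) (hA : activB f l θ B h = ∅)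
    (w : Fin d → ℝ) (u : ℝ) :
    HasLineDerivAt ℝ (fun ψ => batchLoss f l ψ B) 0 θ (Pi.single h w, Pi.single h u, 0) := by
  have hdF : ∀ p ∈ B, 0 < preact θ.1 θ.2.1 p.1 h →
      dFh (Floss f l θ.2.2 p.2) (reluVec θ.1 θ.2.1 p.1) h = 0 := by
    intro p hp ha
    by_contra hne
    have : p ∈ activB f l θ B h := by simp [activB, hp, ha, hne]
    simp [hA] at this
  have hsum := HasDerivAt.fun_sum (u := B) (x := 0) fun p hp =>
    hasDerivAt_comp_reluVec_add_smul_single θ.1 θ.2.1 p.1 h w u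
      (hF θ.2.2 p.2).differentiableAt (hnd p hp) (hdF p hp)
  simpa [HasLineDerivAt, batchLoss] using hsum

lemma gradP_row_eq_zero {L : (Fin H → Fin d → ℝ) × (Fin H → ℝ) × (Fin r → ℝ) → ℝ}
    {θ : (Fin H → Fin d → ℝ) × (Fin H → ℝ) × (Fin r → ℝ)} {h : Fin H}
    (hL : ∀ w u, fderiv ℝ L θ (Pi.single h w, Pi.single h u, 0) = 0) :
    (gradP L θ).1 h = 0 ∧ (gradP L θ).2.1 h = 0 :=
  ⟨funext fun j => by simpa [gradP] using hL (Pi.single j 1) 0, by simpa [gradP] using hL 0 1⟩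

end BatchLoss

theorem stmt6_general {d H r C : ℕ} {Y : Type*}
    (f : (Fin r → ℝ) → (Fin H → ℝ) → Fin C → ℝ)
    (l : (Fin C → ℝ) → Y → ℝ)
    (hf : Differentiable ℝ (fun q : (Fin r → ℝ) × (Fin H → ℝ) => f q.1 q.2))
    (hl : ∀ y, Differentiable ℝ (fun u => l u y))
    (n : ℕ) (η : ℝ)
    (θprev : (Fin H → Fin d → ℝ) × (Fin H → ℝ) × (Fin r → ℝ))
    (Bt : ℕ → Finset ((Fin d → ℝ) × Y))
    (θ : ℕ → ((Fin H → Fin d → ℝ) × (Fin H → ℝ) × (Fin r → ℝ)))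
    (hinit : θ 0 = θprev)
    (hstep : ∀ i < n,
      θ (i + 1) = θ i - η • gradP (fun ψ => batchLoss f l ψ (Bt i)) (θ i))
    (hnd : ∀ i < n, ∀ h' : Fin H, ∀ p ∈ Bt i, preact (θ i).1 (θ i).2.1 p.1 h' ≠ 0)
    (h : Fin H) (j : ℕ) (hj : j ≤ n)
    (hempty : ∀ i < j, activB f l (θ i) (Bt i) h = ∅) :
    (θ j).1 h = θprev.1 h ∧ (θ j).2.1 h = θprev.2.1 h := by
  induction j with
  | zero => simp [hinit]
  | succ i ih =>
    have hi : i < n := hj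
    obtain ⟨ihW, ihb⟩ := ih hi.le fun i' hi' => hempty i' (hi'.trans i.lt_succ_self)
    obtain ⟨hgradW, hgradb⟩ := gradP_row_eq_zero fun w u =>
      fderiv_apply_eq_zero_of_hasLineDerivAt <|
        hasLineDerivAt_batchLoss_row_of_activB_eq_empty (differentiable_floss hf hl) (θ i) (Bt i)
          h (fun p hp => hnd i hi h p hp) (hempty i i.lt_succ_self) w u
    rw [hstep i hi]
    exact ⟨by simp [hgradW, ihW], by simp [hgradb, ihb]⟩

theorem stmt6 {d H r C : ℕ} {Y : Type*}
    (f : (Fin r → ℝ) → (Fin H → ℝ) → Fin C → ℝ)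
    (l : (Fin C → ℝ) → Y → ℝ)
    (hf : Differentiable ℝ (fun q : (Fin r → ℝ) × (Fin H → ℝ) => f q.1 q.2))
    (hl : ∀ y, Differentiable ℝ (fun u => l u y))
    (n : ℕ) (η : ℝ) (hη : 0 < η)
    (θprev : (Fin H → Fin d → ℝ) × (Fin H → ℝ) × (Fin r → ℝ))
    (Bt : ℕ → Finset ((Fin d → ℝ) × Y))
    (θ : ℕ → ((Fin H → Fin d → ℝ) × (Fin H → ℝ) × (Fin r → ℝ)))
    (hinj : ∀ i < n, ∀ p ∈ Bt i, ∀ q ∈ Bt i, p.1 = q.1 → p = q)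
    (hinit : θ 0 = θprev)
    (hstep : ∀ i < n,
      θ (i + 1) = θ i - η • gradP (fun ψ => batchLoss f l ψ (Bt i)) (θ i))
    (hnd : ∀ i < n, ∀ h' : Fin H, ∀ p ∈ Bt i, preact (θ i).1 (θ i).2.1 p.1 h' ≠ 0)
    (h : Fin H) (j : ℕ) (hj : j ≤ n)
    (hempty : ∀ i < j, activB f l (θ i) (Bt i) h = ∅) :
    (θ j).1 h = θprev.1 h ∧ (θ j).2.1 h = θprev.2.1 h :=
  stmt6_general f l hf hl n η θprev Bt θ hinit hstep hnd h j hj hempty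
end
end

section
/- In the FedAvg setup with uniqueness of samples, fix a neuron h and a round t, and define Ã^h_{t,0} = { x ∈ A^h_t : W^h_{t−1} · x + b^h_{t−1} > 0 }. If every sample in Ã^h_{t,0} belongs to client k (i.e., for every x' ∈ Ã^h_{t,0} there is a label y' with (x', y') ∈ D_k), then every sample in the round-level activation set A^h_t belongs to client k. -/
noncomputable section

/-!
While neuron `h` is inactive on a client's batches, the gradient of the batch loss vanishes on
the `h`-th rows of `W` and `b`: at a nondegenerate point the ReLU layer is locally linear with a
frozen activation pattern, so a sample contributes to these rows only if it activates `h`. Hence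
local SGD does not move these rows before the first activation, and the first sample activating
`h` on client `k'` already has positive pre-activation at `θ_{t-1}`. It therefore lies in
`Ã^h_{t,0}` and belongs to client `k`; by uniqueness of samples `k' = k`, and every activating
sample of client `k'` lies in `D k`.
-/

open Filter Topology

abbrev Param (d H r : ℕ) : Type := (Fin H → Fin d → ℝ) × (Fin H → ℝ) × (Fin r → ℝ)

section Derivative

variable {d H r C : ℕ} {Y : Type*}

lemma preact_add (W W' : Fin H → Fin d → ℝ) (b b' : Fin H → ℝ) (x : Fin d → ℝ) (h : Fin H) :
    preact (W + W') (b + b') x h = preact W b x h + preact W' b' x h := by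
  simp only [preact, Pi.add_apply, add_mul, Finset.sum_add_distrib]
  ring

lemma preact_smul (c : ℝ) (W : Fin H → Fin d → ℝ) (b : Fin H → ℝ) (x : Fin d → ℝ) (h : Fin H) :
    preact (c • W) (c • b) x h = c * preact W b x h := by
  simp only [preact, Pi.smul_apply, smul_eq_mul, Finset.mul_sum, mul_add, mul_assoc]

lemma preact_single (w : Fin d → ℝ) (c : ℝ) (x : Fin d → ℝ) (h h' : Fin H) :
    preact (Pi.single h w) (Pi.single h c) x h' =
      if h' = h then (∑ j, w j * x j) + c else 0 := by
  by_cases hh : h' = h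
  · subst hh; simp [preact]
  · simp [preact, hh]

lemma continuous_preact (x : Fin d → ℝ) (h : Fin H) :
    Continuous fun ψ : Param d H r => preact ψ.1 ψ.2.1 x h := by
  unfold preact
  fun_prop

/-- The derivative of the ReLU layer at a nondegenerate `θ₀`: the first layer with the
activation pattern of `θ₀` frozen. -/
def reluMask (x : Fin d → ℝ) (θ₀ : Param d H r) : Param d H r →L[ℝ] (Fin H → ℝ) :=
  LinearMap.toContinuousLinearMap
    { toFun := fun ψ h' => if 0 < preact θ₀.1 θ₀.2.1 x h' then preact ψ.1 ψ.2.1 x h' else 0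
      map_add' := fun ψ χ => by
        funext h'
        split_ifs <;> simp [preact_add, *]
      map_smul' := fun c ψ => by
        funext h'
        split_ifs <;> simp [preact_smul, *] }

lemma reluMask_apply (x : Fin d → ℝ) (θ₀ ψ : Param d H r) (h' : Fin H) :
    reluMask x θ₀ ψ h' = if 0 < preact θ₀.1 θ₀.2.1 x h' then preact ψ.1 ψ.2.1 x h' else 0 :=
  rfl

lemma reluVec_eventuallyEq_reluMask (x : Fin d → ℝ) (θ₀ : Param d H r)
    (hne : ∀ h', preact θ₀.1 θ₀.2.1 x h' ≠ 0) :
    (fun ψ : Param d H r => reluVec ψ.1 ψ.2.1 x) =ᶠ[𝓝 θ₀] reluMask x θ₀ := by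
  have hcoord : ∀ h', ∀ᶠ ψ : Param d H r in 𝓝 θ₀,
      reluVec ψ.1 ψ.2.1 x h' = reluMask x θ₀ ψ h' := by
    intro h'
    have hcont := (continuous_preact (r := r) x h').continuousAt (x := θ₀)
    rcases (hne h').lt_or_gt with hneg | hpos
    · filter_upwards [hcont.eventually_lt_const hneg] with ψ hψ
      simp [reluVec, reluMask_apply, hneg.not_gt, hψ.le]
    · filter_upwards [hcont.eventually_const_lt hpos] with ψ hψ
      simp [reluVec, reluMask_apply, hpos, hψ.le]
  filter_upwards [eventually_all.2 hcoord] with ψ hψ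
  exact funext hψ

lemma hasFDerivAt_reluVec (x : Fin d → ℝ) (θ₀ : Param d H r)
    (hne : ∀ h', preact θ₀.1 θ₀.2.1 x h' ≠ 0) :
    HasFDerivAt (fun ψ : Param d H r => reluVec ψ.1 ψ.2.1 x) (reluMask x θ₀) θ₀ :=
  (reluMask x θ₀).hasFDerivAt.congr_of_eventuallyEq (reluVec_eventuallyEq_reluMask x θ₀ hne)

lemma fderiv_comp_prodMk_left_apply {E F G : Type*} [NormedAddCommGroup E] [NormedSpace ℝ E]
    [NormedAddCommGroup F] [NormedSpace ℝ F] [NormedAddCommGroup G] [NormedSpace ℝ G]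
    {g : E × F → G} {a : E} {b : F} (hg : DifferentiableAt ℝ g (a, b)) (v : F) :
    fderiv ℝ (fun z => g (a, z)) b v = fderiv ℝ g (a, b) (0, v) := by
  have hcomp : HasFDerivAt (fun z => g (a, z))
      ((fderiv ℝ g (a, b)).comp (ContinuousLinearMap.inr ℝ E F)) b :=
    hg.hasFDerivAt.comp b (hasFDerivAt_prodMk_right a b)
  rw [hcomp.fderiv]
  rfl

variable (f : (Fin r → ℝ) → (Fin H → ℝ) → Fin C → ℝ) (l : (Fin C → ℝ) → Y → ℝ)

def lossTermDeriv (y : Y) (x : Fin d → ℝ) (θ₀ : Param d H r) : Param d H r →L[ℝ] ℝ :=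
  (fderiv ℝ (fun q : (Fin r → ℝ) × (Fin H → ℝ) => Floss f l q.1 y q.2)
      (θ₀.2.2, reluVec θ₀.1 θ₀.2.1 x)).comp
    (((ContinuousLinearMap.snd ℝ _ _).comp (ContinuousLinearMap.snd ℝ _ _)).prod (reluMask x θ₀))

variable {f l}

lemma hasFDerivAt_lossTerm
    (hf : Differentiable ℝ (fun q : (Fin r → ℝ) × (Fin H → ℝ) => f q.1 q.2))
    (hl : ∀ y, Differentiable ℝ (fun u => l u y))
    (y : Y) (x : Fin d → ℝ) (θ₀ : Param d H r) (hne : ∀ h', preact θ₀.1 θ₀.2.1 x h' ≠ 0) :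
    HasFDerivAt (fun ψ : Param d H r => Floss f l ψ.2.2 y (reluVec ψ.1 ψ.2.1 x))
      (lossTermDeriv f l y x θ₀) θ₀ := by
  have hG : Differentiable ℝ (fun q : (Fin r → ℝ) × (Fin H → ℝ) => Floss f l q.1 y q.2) :=
    (hl y).comp hf
  exact (hG _).hasFDerivAt.comp θ₀
    ((((ContinuousLinearMap.snd ℝ _ _).comp (ContinuousLinearMap.snd ℝ _ _)).hasFDerivAt).prodMk
      (hasFDerivAt_reluVec x θ₀ hne))

lemma lossTermDeriv_single
    (hf : Differentiable ℝ (fun q : (Fin r → ℝ) × (Fin H → ℝ) => f q.1 q.2))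
    (hl : ∀ y, Differentiable ℝ (fun u => l u y))
    (y : Y) (x : Fin d → ℝ) (θ₀ : Param d H r) (h : Fin H) (w : Fin d → ℝ) (c : ℝ) :
    lossTermDeriv f l y x θ₀ (Pi.single h w, Pi.single h c, 0) =
      if 0 < preact θ₀.1 θ₀.2.1 x h then
        ((∑ j, w j * x j) + c) * dFh (Floss f l θ₀.2.2 y) (reluVec θ₀.1 θ₀.2.1 x) h
      else 0 := by
  have hmask : reluMask x θ₀ ((Pi.single h w, Pi.single h c, 0) : Param d H r) =
      (if 0 < preact θ₀.1 θ₀.2.1 x h then (∑ j, w j * x j) + c else 0) •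
        (Pi.single h 1 : Fin H → ℝ) := by
    funext h'
    by_cases hh : h' = h
    · subst hh; simp [reluMask_apply, preact_single]
    · simp [reluMask_apply, preact_single, hh]
  have hpartial : dFh (Floss f l θ₀.2.2 y) (reluVec θ₀.1 θ₀.2.1 x) h =
      fderiv ℝ (fun q : (Fin r → ℝ) × (Fin H → ℝ) => Floss f l q.1 y q.2)
        (θ₀.2.2, reluVec θ₀.1 θ₀.2.1 x) (0, Pi.single h 1) :=
    fderiv_comp_prodMk_left_apply (((hl y).comp hf) _) _
  have hpair : ((0 : Fin r → ℝ), reluMask x θ₀ ((Pi.single h w, Pi.single h c, 0) : Param d H r)) =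
      (if 0 < preact θ₀.1 θ₀.2.1 x h then (∑ j, w j * x j) + c else 0) •
        ((0 : Fin r → ℝ), (Pi.single h 1 : Fin H → ℝ)) := by
    rw [hmask, Prod.smul_mk, smul_zero]
  simp only [lossTermDeriv, ContinuousLinearMap.comp_apply, ContinuousLinearMap.prod_apply,
    ContinuousLinearMap.coe_snd']
  rw [hpair, map_smul, smul_eq_mul, hpartial]
  split_ifs <;> simp

end Derivative

section Gradient

variable {d H r C : ℕ} {Y : Type*}
  {f : (Fin r → ℝ) → (Fin H → ℝ) → Fin C → ℝ} {l : (Fin C → ℝ) → Y → ℝ}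

lemma activB_subset (θ₀ : Param d H r) (B : Finset ((Fin d → ℝ) × Y)) (h : Fin H) :
    activB f l θ₀ B h ⊆ B :=
  Finset.filter_subset _ _

lemma hasFDerivAt_batchLoss
    (hf : Differentiable ℝ (fun q : (Fin r → ℝ) × (Fin H → ℝ) => f q.1 q.2))
    (hl : ∀ y, Differentiable ℝ (fun u => l u y))
    (B : Finset ((Fin d → ℝ) × Y)) (θ₀ : Param d H r)
    (hne : ∀ h', ∀ p ∈ B, preact θ₀.1 θ₀.2.1 p.1 h' ≠ 0) :
    HasFDerivAt (fun ψ : Param d H r => batchLoss f l ψ B)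
      (∑ p ∈ B, lossTermDeriv f l p.2 p.1 θ₀) θ₀ :=
  HasFDerivAt.fun_sum fun p hp => hasFDerivAt_lossTerm hf hl p.2 p.1 θ₀ fun h' => hne h' p hp

lemma fderiv_batchLoss_single_eq_zero
    (hf : Differentiable ℝ (fun q : (Fin r → ℝ) × (Fin H → ℝ) => f q.1 q.2))
    (hl : ∀ y, Differentiable ℝ (fun u => l u y))
    (B : Finset ((Fin d → ℝ) × Y)) (θ₀ : Param d H r)
    (hne : ∀ h', ∀ p ∈ B, preact θ₀.1 θ₀.2.1 p.1 h' ≠ 0)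
    (h : Fin H) (hempty : activB f l θ₀ B h = ∅) (w : Fin d → ℝ) (c : ℝ) :
    fderiv ℝ (fun ψ : Param d H r => batchLoss f l ψ B) θ₀ (Pi.single h w, Pi.single h c, 0)
      = 0 := by
  rw [(hasFDerivAt_batchLoss hf hl B θ₀ hne).fderiv, sum_apply]
  refine Finset.sum_eq_zero fun p hp => ?_
  have hinactive : p ∉ activB f l θ₀ B h := hempty ▸ Finset.notMem_empty p
  rw [lossTermDeriv_single hf hl]
  by_cases hpos : 0 < preact θ₀.1 θ₀.2.1 p.1 h
  · have hzero : dFh (Floss f l θ₀.2.2 p.2) (reluVec θ₀.1 θ₀.2.1 p.1) h = 0 := by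
      by_contra hd
      exact hinactive (Finset.mem_filter.2 ⟨hp, hpos, hd⟩)
    simp [hpos, hzero]
  · simp [hpos]

lemma gradP_batchLoss_row_eq_zero
    (hf : Differentiable ℝ (fun q : (Fin r → ℝ) × (Fin H → ℝ) => f q.1 q.2))
    (hl : ∀ y, Differentiable ℝ (fun u => l u y))
    (B : Finset ((Fin d → ℝ) × Y)) (θ₀ : Param d H r)
    (hne : ∀ h', ∀ p ∈ B, preact θ₀.1 θ₀.2.1 p.1 h' ≠ 0)
    (h : Fin H) (hempty : activB f l θ₀ B h = ∅) :
    (gradP (fun ψ => batchLoss f l ψ B) θ₀).1 h = 0 ∧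
      (gradP (fun ψ => batchLoss f l ψ B) θ₀).2.1 h = 0 := by
  have hrow := fderiv_batchLoss_single_eq_zero hf hl B θ₀ hne h hempty
  refine ⟨funext fun j => ?_, ?_⟩
  · simpa [gradP] using hrow (Pi.single j 1) 0
  · simpa [gradP] using hrow 0 1

end Gradient

section Trajectory

variable {d H r C : ℕ} {Y : Type*}
  {f : (Fin r → ℝ) → (Fin H → ℝ) → Fin C → ℝ} {l : (Fin C → ℝ) → Y → ℝ}
  {n : ℕ} {η : ℝ} {θ₀ : Param d H r} {θ : ℕ → Param d H r} {B : ℕ → Finset ((Fin d → ℝ) × Y)}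

lemma row_eq_init_of_activB_eq_empty
    (hf : Differentiable ℝ (fun q : (Fin r → ℝ) × (Fin H → ℝ) => f q.1 q.2))
    (hl : ∀ y, Differentiable ℝ (fun u => l u y))
    (hinit : θ 0 = θ₀)
    (hstep : ∀ i < n, θ (i + 1) = θ i - η • gradP (fun ψ => batchLoss f l ψ (B i)) (θ i))
    (hnd : ∀ i < n, ∀ h', ∀ p ∈ B i, preact (θ i).1 (θ i).2.1 p.1 h' ≠ 0)
    (h : Fin H) {i : ℕ} (hi : i ≤ n) (hempty : ∀ j < i, activB f l (θ j) (B j) h = ∅) :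
    (θ i).1 h = θ₀.1 h ∧ (θ i).2.1 h = θ₀.2.1 h := by
  induction i with
  | zero => exact hinit ▸ ⟨rfl, rfl⟩
  | succ i ih =>
    have hin : i < n := hi
    obtain ⟨hW, hb⟩ := ih hin.le fun j hj => hempty j (hj.trans i.lt_succ_self)
    obtain ⟨hgW, hgb⟩ := gradP_batchLoss_row_eq_zero hf hl (B i) (θ i) (hnd i hin) h
      (hempty i i.lt_succ_self)
    rw [hstep i hin]
    exact ⟨by simp [hgW, hW], by simp [hgb, hb]⟩

lemma exists_mem_activB_preact_init_pos
    (hf : Differentiable ℝ (fun q : (Fin r → ℝ) × (Fin H → ℝ) => f q.1 q.2))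
    (hl : ∀ y, Differentiable ℝ (fun u => l u y))
    (hinit : θ 0 = θ₀)
    (hstep : ∀ i < n, θ (i + 1) = θ i - η • gradP (fun ψ => batchLoss f l ψ (B i)) (θ i))
    (hnd : ∀ i < n, ∀ h', ∀ p ∈ B i, preact (θ i).1 (θ i).2.1 p.1 h' ≠ 0)
    (h : Fin H) (hact : ∃ i < n, (activB f l (θ i) (B i) h).Nonempty) :
    ∃ i < n, ∃ p ∈ activB f l (θ i) (B i) h, 0 < preact θ₀.1 θ₀.2.1 p.1 h := by
  classical
  obtain ⟨hfirst, p, hp⟩ := Nat.find_spec hact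
  have hbefore : ∀ j < Nat.find hact, activB f l (θ j) (B j) h = ∅ := fun j hj =>
    Finset.not_nonempty_iff_eq_empty.1 fun hne =>
      Nat.find_min hact hj ⟨hj.trans hfirst, hne⟩
  obtain ⟨hW, hb⟩ := row_eq_init_of_activB_eq_empty hf hl hinit hstep hnd h hfirst.le hbefore
  have hpos : 0 < preact (θ (Nat.find hact)).1 (θ (Nat.find hact)).2.1 p.1 h :=
    (Finset.mem_filter.1 hp).2.1
  refine ⟨_, hfirst, p, hp, ?_⟩
  simpa only [preact, hW, hb] using hpos

end Trajectory

theorem stmt10_general {d H r C K : ℕ} {Y : Type*}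
    (f : (Fin r → ℝ) → (Fin H → ℝ) → Fin C → ℝ)
    (l : (Fin C → ℝ) → Y → ℝ)
    (hf : Differentiable ℝ (fun q : (Fin r → ℝ) × (Fin H → ℝ) => f q.1 q.2))
    (hl : ∀ y, Differentiable ℝ (fun u => l u y))
    (n : ℕ) (η : ℝ)
    (θprev : (Fin H → Fin d → ℝ) × (Fin H → ℝ) × (Fin r → ℝ))
    (D : Fin K → Finset ((Fin d → ℝ) × Y))
    (Bt : Fin K → ℕ → Finset ((Fin d → ℝ) × Y))
    (θ : Fin K → ℕ → ((Fin H → Fin d → ℝ) × (Fin H → ℝ) × (Fin r → ℝ)))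
    (hBD : ∀ k, ∀ i < n, Bt k i ⊆ D k)
    (hinit : ∀ k, θ k 0 = θprev)
    (hstep : ∀ k, ∀ i < n,
      θ k (i + 1) = θ k i - η • gradP (fun ψ => batchLoss f l ψ (Bt k i)) (θ k i))
    (hnd : ∀ k, ∀ i < n, ∀ h' : Fin H, ∀ p ∈ Bt k i,
      preact (θ k i).1 (θ k i).2.1 p.1 h' ≠ 0)
    (hunique : ∀ k₁ k₂ : Fin K, ∀ p₁ ∈ D k₁, ∀ p₂ ∈ D k₂, p₁.1 = p₂.1 → k₁ = k₂ ∧ p₁ = p₂)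
    (h : Fin H) (k : Fin K)
    (hall : ∀ x' ∈ roundActiv f l n θ Bt h,
      0 < preact θprev.1 θprev.2.1 x' h → ∃ y', (x', y') ∈ D k) :
    ∀ x ∈ roundActiv f l n θ Bt h, ∃ y, (x, y) ∈ D k := by
  rintro x ⟨k', i, hi, y, hxy⟩
  obtain ⟨i₀, hi₀, p, hp, hpos⟩ := exists_mem_activB_preact_init_pos hf hl (hinit k') (hstep k')
    (hnd k') h ⟨i, hi, _, hxy⟩
  obtain ⟨y', hy'⟩ := hall p.1 ⟨k', i₀, hi₀, p.2, hp⟩ hpos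
  have hpD : p ∈ D k' := hBD k' i₀ hi₀ (activB_subset _ _ _ hp)
  obtain rfl : k' = k := (hunique k' k p hpD _ hy' rfl).1
  exact ⟨y, hBD k' i hi (activB_subset _ _ _ hxy)⟩

theorem stmt10 {d H r C K : ℕ} {Y : Type*} (hK : 0 < K)
    (f : (Fin r → ℝ) → (Fin H → ℝ) → Fin C → ℝ)
    (l : (Fin C → ℝ) → Y → ℝ)
    (hf : Differentiable ℝ (fun q : (Fin r → ℝ) × (Fin H → ℝ) => f q.1 q.2))
    (hl : ∀ y, Differentiable ℝ (fun u => l u y))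
    (n : ℕ) (η : ℝ) (hη : 0 < η)
    (θprev : (Fin H → Fin d → ℝ) × (Fin H → ℝ) × (Fin r → ℝ))
    (D : Fin K → Finset ((Fin d → ℝ) × Y))
    (Bt : Fin K → ℕ → Finset ((Fin d → ℝ) × Y))
    (θ : Fin K → ℕ → ((Fin H → Fin d → ℝ) × (Fin H → ℝ) × (Fin r → ℝ)))
    (hBD : ∀ k, ∀ i < n, Bt k i ⊆ D k)
    (hinit : ∀ k, θ k 0 = θprev)
    (hstep : ∀ k, ∀ i < n,
      θ k (i + 1) = θ k i - η • gradP (fun ψ => batchLoss f l ψ (Bt k i)) (θ k i))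
    (hnd : ∀ k, ∀ i < n, ∀ h' : Fin H, ∀ p ∈ Bt k i,
      preact (θ k i).1 (θ k i).2.1 p.1 h' ≠ 0)
    (hunique : ∀ k₁ k₂ : Fin K, ∀ p₁ ∈ D k₁, ∀ p₂ ∈ D k₂, p₁.1 = p₂.1 → k₁ = k₂ ∧ p₁ = p₂)
    (h : Fin H) (k : Fin K)
    (hall : ∀ x' ∈ roundActiv f l n θ Bt h,
      0 < preact θprev.1 θprev.2.1 x' h → ∃ y', (x', y') ∈ D k) :
    ∀ x ∈ roundActiv f l n θ Bt h, ∃ y, (x, y) ∈ D k :=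
  stmt10_general f l hf hl n η θprev D Bt θ hBD hinit hstep hnd hunique h k hall
end
end

section
/- In the FedAvg setup, fix a round t, a client k, and a neuron h, and suppose some batch-level activation set of client k at round t is nonempty. Let i_k = min { i ∈ {0,…,n−1} : A^h(θ_{t,k,i}, B_{t,k,i}) ≠ ∅ } be the first local update at which a sample of client k activates neuron h. Then every sample x' ∈ A^h(θ_{t,k,i_k}, B_{t,k,i_k}) satisfies W^h_{t−1} · x' + b^h_{t−1} > 0; that is, the first activating samples of each client activate neuron h already with respect to the shared extended weights (W^h_{t−1}, b^h_{t−1}) at the start of the round, and hence belong to Ã^h_{t,0} = { x ∈ A^h_t : W^h_{t−1} · x + b^h_{t−1} > 0 }. -/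
noncomputable section

/-! Near a parameter at which no pre-activation vanishes, `ReLU(W x + b)` agrees with a linear
map, so the chain rule gives the gradient of the batch loss with respect to the row `(W^h, b^h)`
as a sum over the samples activating neuron `h`, each weighted by `∂_h F_{φ,y}`. Before the first
local step at which the activation set of `h` is nonempty, this gradient vanishes, so SGD leaves
`(W^h, b^h)` at its value at the start of the round. -/

open scoped Topology

namespace ReLUNet

variable {d H r C : ℕ} {Y : Type*}

abbrev Params (d H r : ℕ) := (Fin H → Fin d → ℝ) × (Fin H → ℝ) × (Fin r → ℝ)

lemma preact_congr {W W' : Fin H → Fin d → ℝ} {b b' : Fin H → ℝ} {h : Fin H}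
    (hW : W h = W' h) (hb : b h = b' h) (x : Fin d → ℝ) :
    preact W b x h = preact W' b' x h := by
  simp only [preact, hW, hb]

def preactCLM (x : Fin d → ℝ) (h : Fin H) : Params d H r →L[ℝ] ℝ :=
  LinearMap.toContinuousLinearMap
    { toFun := fun ψ => preact ψ.1 ψ.2.1 x h
      map_add' := fun ψ ψ' => by
        simp only [preact, Prod.fst_add, Prod.snd_add, Pi.add_apply, add_mul,
          Finset.sum_add_distrib]
        ring
      map_smul' := fun c ψ => by
        simp [preact, Finset.mul_sum, mul_add, mul_assoc] }

@[simp]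
lemma preactCLM_apply (x : Fin d → ℝ) (h : Fin H) (ψ : Params d H r) :
    preactCLM x h ψ = preact ψ.1 ψ.2.1 x h := rfl

open Classical in
def reluPattern (x : Fin d → ℝ) (θ₀ : Params d H r) : Params d H r →L[ℝ] (Fin H → ℝ) :=
  ContinuousLinearMap.pi fun h => if 0 < preact θ₀.1 θ₀.2.1 x h then preactCLM x h else 0

lemma reluVec_eventuallyEq_reluPattern {x : Fin d → ℝ} {θ₀ : Params d H r}
    (hnd : ∀ h, preact θ₀.1 θ₀.2.1 x h ≠ 0) :
    (fun ψ : Params d H r => reluVec ψ.1 ψ.2.1 x) =ᶠ[𝓝 θ₀] reluPattern x θ₀ := by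
  have hcoord : ∀ h, ∀ᶠ ψ : Params d H r in 𝓝 θ₀,
      reluVec ψ.1 ψ.2.1 x h = reluPattern x θ₀ ψ h := by
    intro h
    have hcont := (preactCLM (r := r) x h).continuous.continuousAt (x := θ₀)
    rcases (hnd h).lt_or_gt with hneg | hpos
    · filter_upwards [hcont.eventually_lt continuousAt_const hneg] with ψ hψ
      rw [preactCLM_apply] at hψ
      simp [reluVec, reluPattern, hneg.not_gt, hψ.le]
    · filter_upwards [continuousAt_const.eventually_lt hcont hpos] with ψ hψ
      rw [preactCLM_apply] at hψ
      simp [reluVec, reluPattern, hpos, hψ.le]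
  filter_upwards [Filter.eventually_all.2 hcoord] with ψ hψ
  exact funext hψ

lemma hasFDerivAt_reluVec {x : Fin d → ℝ} {θ₀ : Params d H r}
    (hnd : ∀ h, preact θ₀.1 θ₀.2.1 x h ≠ 0) :
    HasFDerivAt (fun ψ : Params d H r => reluVec ψ.1 ψ.2.1 x) (reluPattern x θ₀) θ₀ :=
  (reluPattern x θ₀).hasFDerivAt.congr_of_eventuallyEq (reluVec_eventuallyEq_reluPattern hnd)

def neuronDir (h : Fin H) (w : Fin d → ℝ) (c : ℝ) : Params d H r :=
  (Pi.single h w, Pi.single h c, 0)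

lemma reluPattern_neuronDir (x : Fin d → ℝ) (θ₀ : Params d H r) (h : Fin H) (w : Fin d → ℝ)
    (c : ℝ) :
    reluPattern x θ₀ (neuronDir h w c) =
      Pi.single h (if 0 < preact θ₀.1 θ₀.2.1 x h then (∑ j, w j * x j) + c else 0) := by
  funext h'
  simp only [reluPattern, ContinuousLinearMap.pi_apply]
  by_cases hh : h' = h
  · subst hh
    split_ifs <;> simp [neuronDir, preact]
  · split_ifs <;> simp [neuronDir, preact, hh]

lemma fderiv_comp_prodMk_right_apply {E F G : Type*} [NormedAddCommGroup E] [NormedSpace ℝ E]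
    [NormedAddCommGroup F] [NormedSpace ℝ F] [NormedAddCommGroup G] [NormedSpace ℝ G]
    {Φ : E × F → G} {a : E} {b : F} (hΦ : DifferentiableAt ℝ Φ (a, b)) (v : F) :
    fderiv ℝ (fun z => Φ (a, z)) b v = fderiv ℝ Φ (a, b) (0, v) := by
  change fderiv ℝ (Φ ∘ Prod.mk a) b v = _
  rw [(hΦ.hasFDerivAt.comp b (hasFDerivAt_prodMk_right a b)).fderiv]
  rfl

section Loss

variable (f : (Fin r → ℝ) → (Fin H → ℝ) → Fin C → ℝ) (l : (Fin C → ℝ) → Y → ℝ)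

lemma hasFDerivAt_sampleLoss {x : Fin d → ℝ} {y : Y} {θ₀ : Params d H r}
    (hG : Differentiable ℝ (fun q : (Fin r → ℝ) × (Fin H → ℝ) => l (f q.1 q.2) y))
    (hnd : ∀ h, preact θ₀.1 θ₀.2.1 x h ≠ 0) :
    HasFDerivAt (fun ψ : Params d H r => Floss f l ψ.2.2 y (reluVec ψ.1 ψ.2.1 x))
      ((fderiv ℝ (fun q : (Fin r → ℝ) × (Fin H → ℝ) => l (f q.1 q.2) y)
          (θ₀.2.2, reluVec θ₀.1 θ₀.2.1 x)).comp
        (((ContinuousLinearMap.snd ℝ _ _).comp (ContinuousLinearMap.snd ℝ _ _)).prod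
          (reluPattern x θ₀))) θ₀ :=
  (hG _).hasFDerivAt.comp θ₀ (hasFDerivAt_snd.snd.prodMk (hasFDerivAt_reluVec hnd))

lemma fderiv_batchLoss_neuronDir {B : Finset ((Fin d → ℝ) × Y)} {θ₀ : Params d H r}
    (hG : ∀ y, Differentiable ℝ (fun q : (Fin r → ℝ) × (Fin H → ℝ) => l (f q.1 q.2) y))
    (hnd : ∀ p ∈ B, ∀ h, preact θ₀.1 θ₀.2.1 p.1 h ≠ 0) (h : Fin H) (w : Fin d → ℝ) (c : ℝ) :
    fderiv ℝ (fun ψ => batchLoss f l ψ B) θ₀ (neuronDir h w c) =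
      ∑ p ∈ B, if 0 < preact θ₀.1 θ₀.2.1 p.1 h then
        ((∑ j, w j * p.1 j) + c) * dFh (Floss f l θ₀.2.2 p.2) (reluVec θ₀.1 θ₀.2.1 p.1) h
      else 0 := by
  have hL : HasFDerivAt (fun ψ => batchLoss f l ψ B) _ θ₀ :=
    HasFDerivAt.fun_sum fun p hp => hasFDerivAt_sampleLoss f l (hG p.2) (hnd p hp)
  rw [hL.fderiv, sum_apply]
  refine Finset.sum_congr rfl fun p _ => ?_
  simp only [ContinuousLinearMap.comp_apply, ContinuousLinearMap.prod_apply,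
    ContinuousLinearMap.coe_snd', reluPattern_neuronDir]
  split_ifs
  · rw [show ((neuronDir h w c : Params d H r).2.2, Pi.single h ((∑ j, w j * p.1 j) + c)) =
        ((∑ j, w j * p.1 j) + c) • ((0 : Fin r → ℝ), (Pi.single h 1 : Fin H → ℝ)) by
      simp [neuronDir, ← Pi.single_smul],
      map_smul, smul_eq_mul, ← fderiv_comp_prodMk_right_apply (hG p.2 _)]
    rfl
  · simp only [neuronDir, Pi.single_zero, Prod.mk_zero_zero, map_zero]

lemma fderiv_batchLoss_neuronDir_eq_zero {B : Finset ((Fin d → ℝ) × Y)} {θ₀ : Params d H r}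
    (hG : ∀ y, Differentiable ℝ (fun q : (Fin r → ℝ) × (Fin H → ℝ) => l (f q.1 q.2) y))
    (hnd : ∀ p ∈ B, ∀ h, preact θ₀.1 θ₀.2.1 p.1 h ≠ 0) {h : Fin H}
    (hA : activB f l θ₀ B h = ∅) (w : Fin d → ℝ) (c : ℝ) :
    fderiv ℝ (fun ψ => batchLoss f l ψ B) θ₀ (neuronDir h w c) = 0 := by
  rw [fderiv_batchLoss_neuronDir f l hG hnd]
  refine Finset.sum_eq_zero fun p hp => ?_
  split_ifs with hpos
  · have hp' : p ∉ activB f l θ₀ B h := by simp [hA]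
    simp only [activB, Finset.mem_filter, not_and, not_not] at hp'
    rw [hp' hp hpos, mul_zero]
  · rfl

lemma sgdStep_row_eq {B : Finset ((Fin d → ℝ) × Y)} {θ₀ : Params d H r}
    (hG : ∀ y, Differentiable ℝ (fun q : (Fin r → ℝ) × (Fin H → ℝ) => l (f q.1 q.2) y))
    (hnd : ∀ p ∈ B, ∀ h, preact θ₀.1 θ₀.2.1 p.1 h ≠ 0) {h : Fin H}
    (hA : activB f l θ₀ B h = ∅) (η : ℝ) :
    (θ₀ - η • gradP (fun ψ => batchLoss f l ψ B) θ₀).1 h = θ₀.1 h ∧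
      (θ₀ - η • gradP (fun ψ => batchLoss f l ψ B) θ₀).2.1 h = θ₀.2.1 h := by
  have hW : (gradP (fun ψ => batchLoss f l ψ B) θ₀).1 h = 0 := funext fun j => by
    simpa [gradP, neuronDir] using
      fderiv_batchLoss_neuronDir_eq_zero f l hG hnd hA (Pi.single j 1) 0
  have hb : (gradP (fun ψ => batchLoss f l ψ B) θ₀).2.1 h = 0 := by
    simpa [gradP, neuronDir] using fderiv_batchLoss_neuronDir_eq_zero f l hG hnd hA 0 1
  simp [hW, hb]

lemma row_eq_of_activB_eq_empty {θ : ℕ → Params d H r} {B : ℕ → Finset ((Fin d → ℝ) × Y)}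
    {η : ℝ} {h : Fin H} {m : ℕ}
    (hG : ∀ y, Differentiable ℝ (fun q : (Fin r → ℝ) × (Fin H → ℝ) => l (f q.1 q.2) y))
    (hstep : ∀ i < m, θ (i + 1) = θ i - η • gradP (fun ψ => batchLoss f l ψ (B i)) (θ i))
    (hnd : ∀ i < m, ∀ p ∈ B i, ∀ h', preact (θ i).1 (θ i).2.1 p.1 h' ≠ 0)
    (hA : ∀ i < m, activB f l (θ i) (B i) h = ∅) :
    (θ m).1 h = (θ 0).1 h ∧ (θ m).2.1 h = (θ 0).2.1 h := by
  induction m with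
  | zero => exact ⟨rfl, rfl⟩
  | succ m ih =>
    obtain ⟨hW, hb⟩ := ih (fun i hi => hstep i (by omega)) (fun i hi => hnd i (by omega))
      (fun i hi => hA i (by omega))
    obtain ⟨hW', hb'⟩ := sgdStep_row_eq f l hG (hnd m (by omega)) (hA m (by omega)) η
    rw [hstep m (by omega)]
    exact ⟨hW'.trans hW, hb'.trans hb⟩

end Loss

end ReLUNet

theorem stmt14_general {d H r C K : ℕ} {Y : Type*}
    (f : (Fin r → ℝ) → (Fin H → ℝ) → Fin C → ℝ)
    (l : (Fin C → ℝ) → Y → ℝ)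
    (hf : Differentiable ℝ (fun q : (Fin r → ℝ) × (Fin H → ℝ) => f q.1 q.2))
    (hl : ∀ y, Differentiable ℝ (fun u => l u y))
    (n : ℕ) (η : ℝ)
    (θprev : (Fin H → Fin d → ℝ) × (Fin H → ℝ) × (Fin r → ℝ))
    (Bt : Fin K → ℕ → Finset ((Fin d → ℝ) × Y))
    (θ : Fin K → ℕ → ((Fin H → Fin d → ℝ) × (Fin H → ℝ) × (Fin r → ℝ)))
    (hinit : ∀ k, θ k 0 = θprev)
    (hstep : ∀ k, ∀ i < n,
      θ k (i + 1) = θ k i - η • gradP (fun ψ => batchLoss f l ψ (Bt k i)) (θ k i))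
    (hnd : ∀ k, ∀ i < n, ∀ h' : Fin H, ∀ p ∈ Bt k i,
      preact (θ k i).1 (θ k i).2.1 p.1 h' ≠ 0)
    (h : Fin H) (k : Fin K) (ik : ℕ) (hik : ik < n)
    (hmin : ∀ i < ik, activB f l (θ k i) (Bt k i) h = ∅) :
    ∀ p ∈ activB f l (θ k ik) (Bt k ik) h,
      0 < preact θprev.1 θprev.2.1 p.1 h ∧
      p.1 ∈ roundActiv f l n θ Bt h := by
  intro p hp
  have hG : ∀ y, Differentiable ℝ (fun q : (Fin r → ℝ) × (Fin H → ℝ) => l (f q.1 q.2) y) :=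
    fun y => (hl y).comp hf
  obtain ⟨hW, hb⟩ := ReLUNet.row_eq_of_activB_eq_empty f l hG
    (fun i hi => hstep k i (hi.trans hik)) (fun i hi p hp h' => hnd k i (hi.trans hik) h' p hp)
    hmin
  refine ⟨?_, k, ik, hik, p.2, hp⟩
  rw [← hinit k, ReLUNet.preact_congr hW.symm hb.symm]
  exact (Finset.mem_filter.1 hp).2.1

theorem stmt14 {d H r C K : ℕ} {Y : Type*} (hK : 0 < K)
    (f : (Fin r → ℝ) → (Fin H → ℝ) → Fin C → ℝ)
    (l : (Fin C → ℝ) → Y → ℝ)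
    (hf : Differentiable ℝ (fun q : (Fin r → ℝ) × (Fin H → ℝ) => f q.1 q.2))
    (hl : ∀ y, Differentiable ℝ (fun u => l u y))
    (n : ℕ) (η : ℝ) (hη : 0 < η)
    (θprev : (Fin H → Fin d → ℝ) × (Fin H → ℝ) × (Fin r → ℝ))
    (D : Fin K → Finset ((Fin d → ℝ) × Y))
    (Bt : Fin K → ℕ → Finset ((Fin d → ℝ) × Y))
    (θ : Fin K → ℕ → ((Fin H → Fin d → ℝ) × (Fin H → ℝ) × (Fin r → ℝ)))
    (hBD : ∀ k, ∀ i < n, Bt k i ⊆ D k)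
    (hinit : ∀ k, θ k 0 = θprev)
    (hstep : ∀ k, ∀ i < n,
      θ k (i + 1) = θ k i - η • gradP (fun ψ => batchLoss f l ψ (Bt k i)) (θ k i))
    (hnd : ∀ k, ∀ i < n, ∀ h' : Fin H, ∀ p ∈ Bt k i,
      preact (θ k i).1 (θ k i).2.1 p.1 h' ≠ 0)
    (h : Fin H) (k : Fin K) (ik : ℕ) (hik : ik < n)
    (hne : (activB f l (θ k ik) (Bt k ik) h).Nonempty)
    (hmin : ∀ i < ik, activB f l (θ k i) (Bt k i) h = ∅) :
    ∀ p ∈ activB f l (θ k ik) (Bt k ik) h,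
      0 < preact θprev.1 θprev.2.1 p.1 h ∧
      p.1 ∈ roundActiv f l n θ Bt h :=
  stmt14_general f l hf hl n η θprev Bt θ hinit hstep hnd h k ik hik hmin
end
end
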